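/- arXiv:0908.0024 — 4 statements merged into one kernel-verified Lean document; each statement's English description precedes it below -/
import Mathlib

section
/- For every λ ∈ ℝ, the characteristic function identity ∫_ℝ e^{iλx} f(x) dx = exp(iσλ − κ|λ|) holds; equivalently, the Fourier transform of f is λ ↦ e^{−|λ|ω(λ)} with ω(λ) = e^{−iπ·sign(λ)·β/2} = κ − i·sign(λ)·σ. -/
/-!
`f` is the Cauchy density with location `σ` and scale `κ > 0`. An affine change of variables
reduces its characteristic function to `∫ e^{itu} / (1 + u²) du = π e^{-|t|}`, which is Fourier
inversion applied to the elementary transform `∫ e^{itu} e^{-|u|} du = 2 / (1 + t²)`.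
-/

open Real MeasureTheory
open Set Complex FourierTransform ProbabilityTheory
open scoped NNReal

lemma integrable_exp_neg_abs : Integrable fun x : ℝ ↦ Real.exp (-|x|) := by
  rw [← integrableOn_univ, ← Iic_union_Ioi (a := 0)]
  refine ((integrableOn_exp_Iic 0).congr_fun (fun x hx ↦ ?_) measurableSet_Iic).union
    ((integrableOn_exp_neg_Ioi 0).congr_fun (fun x hx ↦ ?_) measurableSet_Ioi)
  · rw [abs_of_nonpos hx, neg_neg]
  · rw [abs_of_pos hx]

lemma integral_exp_mul_I_mul_exp_neg_abs (t : ℝ) :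
    ∫ u : ℝ, exp (I * t * u) * Real.exp (-|u|) = 2 / (1 + t ^ 2) := by
  have hIic : EqOn (fun u : ℝ ↦ exp (I * t * u) * Real.exp (-|u|))
      (fun u ↦ exp ((1 + t * I) * u)) (Iic 0) := fun u hu ↦ by
    simp only [abs_of_nonpos (mem_Iic.mp hu), neg_neg, ofReal_exp, ← Complex.exp_add]
    ring_nf
  have hIoi : EqOn (fun u : ℝ ↦ exp (I * t * u) * Real.exp (-|u|))
      (fun u ↦ exp ((t * I - 1) * u)) (Ioi 0) := fun u hu ↦ by
    simp only [abs_of_pos (mem_Ioi.mp hu), ofReal_neg, ofReal_exp, ← Complex.exp_add]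
    ring_nf
  have hre₁ : 0 < (1 + t * I).re := by simp
  have hre₂ : (t * I - 1).re < 0 := by simp
  rw [← intervalIntegral.integral_Iic_add_Ioi
      ((integrableOn_exp_mul_complex_Iic hre₁ 0).congr_fun hIic.symm measurableSet_Iic)
      ((integrableOn_exp_mul_complex_Ioi hre₂ 0).congr_fun hIoi.symm measurableSet_Ioi),
    setIntegral_congr_fun measurableSet_Iic hIic, setIntegral_congr_fun measurableSet_Ioi hIoi,
    integral_exp_mul_complex_Iic hre₁, integral_exp_mul_complex_Ioi hre₂]
  have h₁ : 1 + t * I ≠ 0 := fun h ↦ by simpa using congrArg re h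
  have h₂ : t * I - 1 ≠ 0 := fun h ↦ by simpa using congrArg re h
  have h₃ : 1 + (t : ℂ) ^ 2 ≠ 0 := by exact_mod_cast (by positivity : (1 + t ^ 2 : ℝ) ≠ 0)
  simp only [ofReal_zero, mul_zero, Complex.exp_zero]
  field_simp
  linear_combination (-2 * (t : ℂ) ^ 2) * I_sq

lemma fourier_exp_neg_abs (w : ℝ) :
    𝓕 (fun x : ℝ ↦ (Real.exp (-|x|) : ℂ)) w = ((2 / (1 + (2 * π * w) ^ 2) : ℝ) : ℂ) := by
  have hrhs : ((2 / (1 + (2 * π * w) ^ 2) : ℝ) : ℂ) = 2 / (1 + ((-(2 * π * w) : ℝ) : ℂ) ^ 2) := by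
    push_cast; ring
  rw [fourier_real_eq_integral_exp_smul, hrhs, ← integral_exp_mul_I_mul_exp_neg_abs]
  congr 1 with v
  rw [smul_eq_mul]
  push_cast
  ring_nf

lemma integrable_fourier_exp_neg_abs :
    Integrable (𝓕 fun x : ℝ ↦ (Real.exp (-|x|) : ℂ)) := by
  simp_rw [funext fourier_exp_neg_abs, div_eq_mul_inv]
  exact ((integrable_inv_one_add_sq.comp_mul_left' (by positivity : 2 * π ≠ 0)).const_mul
    2).ofReal

lemma integral_exp_mul_I_mul_inv_one_add_sq (t : ℝ) :
    ∫ u : ℝ, exp (I * t * u) * ((1 + u ^ 2)⁻¹ : ℝ) = π * Real.exp (-|t|) := by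
  have hcont : Continuous fun x : ℝ ↦ (Real.exp (-|x|) : ℂ) := by fun_prop
  have hinv := congrFun (hcont.fourierInv_fourier_eq integrable_exp_neg_abs.ofReal
    integrable_fourier_exp_neg_abs) t
  rw [fourierInv_eq'] at hinv
  simp_rw [fourier_exp_neg_abs] at hinv
  -- Mathlib's Fourier transform uses `e^{-2πixw}`; the substitution `u = 2πv` removes the `2π`.
  have hsub := Measure.integral_comp_mul_left
    (fun u : ℝ ↦ exp (I * t * u) * ((1 + u ^ 2)⁻¹ : ℝ)) (2 * π)
  have htwo : (∫ v : ℝ, exp ((2 * π * inner ℝ v t : ℝ) * I) • ((2 / (1 + (2 * π * v) ^ 2) : ℝ) : ℂ))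
      = 2 * ∫ v : ℝ, exp (I * t * ↑(2 * π * v)) * ((1 + (2 * π * v) ^ 2)⁻¹ : ℝ) := by
    rw [← integral_const_mul]
    congr 1 with v
    simp only [Real.inner_apply, smul_eq_mul]
    push_cast
    ring_nf
  have hπ : (π : ℂ) ≠ 0 := ofReal_ne_zero.mpr pi_ne_zero
  have hscale : (2 : ℂ) * ((2 * π)⁻¹ : ℝ) = (π : ℂ)⁻¹ := by push_cast; field_simp
  rw [htwo, hsub, abs_of_pos (by positivity), real_smul, ← mul_assoc, hscale] at hinv
  rw [← hinv, ← mul_assoc, mul_inv_cancel₀ hπ, one_mul]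

lemma integral_exp_mul_I_mul_cauchyPDFReal (x₀ : ℝ) {γ : ℝ≥0} (hγ : γ ≠ 0) (t : ℝ) :
    ∫ x : ℝ, exp (I * t * x) * cauchyPDFReal x₀ γ x = exp (I * x₀ * t - (γ * |t| : ℝ)) := by
  have hγpos : (0 : ℝ) < γ := NNReal.coe_pos.mpr (pos_iff_ne_zero.mpr hγ)
  set F : ℝ → ℂ := fun x ↦ exp (I * t * x) * cauchyPDFReal x₀ γ x
  have hsub : ∫ x, F x = (γ : ℝ) • ∫ u, F (γ * u + x₀) := by
    rw [Measure.integral_comp_mul_left (fun y ↦ F (y + x₀)), integral_add_right_eq_self,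
      smul_smul, abs_inv, abs_of_pos hγpos, mul_inv_cancel₀ hγpos.ne', one_smul]
  have hF : ∀ u : ℝ, F (γ * u + x₀) = exp (I * x₀ * t) * ((π : ℂ) * γ)⁻¹ *
      (exp (I * ↑(t * γ) * u) * ((1 + u ^ 2)⁻¹ : ℝ)) := fun u ↦ by
    simp only [F, cauchyPDFReal_def', add_sub_cancel_right,
      mul_div_cancel_left₀ u hγpos.ne']
    rw [mul_mul_mul_comm, ← Complex.exp_add]
    push_cast
    ring_nf
  have hπ : (π : ℂ) ≠ 0 := ofReal_ne_zero.mpr pi_ne_zero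
  have hγ' : ((γ : ℝ) : ℂ) ≠ 0 := ofReal_ne_zero.mpr hγpos.ne'
  rw [hsub, funext hF, integral_const_mul, integral_exp_mul_I_mul_inv_one_add_sq, real_smul,
    abs_mul, abs_of_pos hγpos, sub_eq_add_neg, Complex.exp_add, ofReal_exp]
  push_cast
  field_simp

theorem stable_characteristic_function_general
    (β : ℝ) (hβ : β ∈ Set.Ioo (-1 : ℝ) 1)
    (κ σ : ℝ) (hκ : κ = Real.cos (π * β / 2))
    (f : ℝ → ℝ) (hf : ∀ x : ℝ, f x = 1 / (π * κ * (1 + (x - σ) ^ 2 / κ ^ 2))) :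
    ∀ l : ℝ,
      (∫ x : ℝ, Complex.exp (Complex.I * (l : ℂ) * (x : ℂ)) * (f x : ℂ)) =
        Complex.exp (Complex.I * (σ : ℂ) * (l : ℂ) - ((κ * |l| : ℝ) : ℂ)) := by
  intro l
  have hκpos : 0 < κ := hκ ▸ Real.cos_pos_of_mem_Ioo
    ⟨by nlinarith [hβ.1, pi_pos], by nlinarith [hβ.2, pi_pos]⟩
  have hκ_coe : (κ.toNNReal : ℝ) = κ := Real.coe_toNNReal κ hκpos.le
  have hf_cauchy : f = cauchyPDFReal σ κ.toNNReal := funext fun x ↦ by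
    rw [hf, cauchyPDFReal_def', NNReal.coe_inv, hκ_coe, div_pow, one_div, mul_inv, mul_inv]
  rw [hf_cauchy, integral_exp_mul_I_mul_cauchyPDFReal σ (by simpa using hκpos) l, hκ_coe]

/-- For the α = 1, skewness-β stable density
`f(x) = 1/(πκ(1 + (x−σ)²/κ²))` with `κ = cos(πβ/2)`, `σ = sin(πβ/2)`,
the characteristic function identity
`∫ e^{iλx} f(x) dx = exp(iσλ − κ|λ|)` holds for every `λ ∈ ℝ`. -/
theorem stable_characteristic_function
    (β : ℝ) (hβ : β ∈ Set.Ioo (-1 : ℝ) 1)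
    (κ σ : ℝ) (hκ : κ = Real.cos (π * β / 2)) (hσ : σ = Real.sin (π * β / 2))
    (f : ℝ → ℝ) (hf : ∀ x : ℝ, f x = 1 / (π * κ * (1 + (x - σ) ^ 2 / κ ^ 2))) :
    ∀ l : ℝ,
      (∫ x : ℝ, Complex.exp (Complex.I * (l : ℂ) * (x : ℂ)) * (f x : ℂ)) =
        Complex.exp (Complex.I * (σ : ℂ) * (l : ℂ) - ((κ * |l| : ℝ) : ℂ)) :=
  stable_characteristic_function_general β hβ κ σ hκ f hf
end

section
/- For every x ∈ ℝ, the principal value limit lim_{ε→0⁺} ∫_{{y : |y−x| ≥ ε}} (arctan(x) − arctan(y))/(x−y)² dy exists and equals πx/(1+x²). Equivalently, the half-Laplacian (−Δ)^{1/2}, given by the singular integral (1/π)·P.V.∫ (u(x)−u(y))/(x−y)² dy, applied to the wave profile F(x) = 1/2 + (1/π)·arctan(x) equals x·f(x) = x/(π(1+x²)). -/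
/-!
For fixed `x` the kernel `y ↦ (arctan x - arctan y) / (x - y) ^ 2` has the explicit primitive
`Φ y = (arctan x - arctan y) / (x - y) + (x arctan y + log (1 + y²) / 2 - log |x - y|) / (1 + x²)`.
The kernel has a constant sign on each side of `x`, so it is integrable on `|y - x| ≥ ε` and the
integral equals `Φ (x - ε) - Φ (x + ε) + Φ (+∞) - Φ (-∞)`. Since `Φ (±∞) = ± π x / (2 (1 + x²))`
and `Φ (x - ε) - Φ (x + ε) → 0`, the principal value is `π x / (1 + x²)`.
-/

open Real MeasureTheory Filter Topology Set Bornology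

theorem integrableOn_Iic_deriv_of_nonneg' {g g' : ℝ → ℝ} {a l : ℝ}
    (hderiv : ∀ y ∈ Iic a, HasDerivAt g (g' y) y) (hpos : ∀ y ∈ Iio a, 0 ≤ g' y)
    (hg : Tendsto g atBot (𝓝 l)) : IntegrableOn g' (Iic a) := by
  have hreflected : IntegrableOn (fun t => -g' (-t)) (Ioi (-a)) := by
    refine integrableOn_Ioi_deriv_of_nonpos' (g := fun t => g (-t)) (fun t ht => ?_)
      (fun t ht => neg_nonpos.2 (hpos _ (neg_lt.1 (mem_Ioi.1 ht))))
      (hg.comp tendsto_neg_atTop_atBot)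
    simpa [Function.comp_def] using
      (hderiv (-t) (neg_le.1 (mem_Ici.1 ht))).comp t (hasDerivAt_neg t)
  refine ((Measure.measurePreserving_neg volume).integrableOn_comp_preimage
    (Homeomorph.neg ℝ).measurableEmbedding).1 ?_
  rw [neg_preimage, neg_Iic, integrableOn_Ici_iff_integrableOn_Ioi]
  simpa [Function.comp_def] using hreflected.neg

theorem setOf_le_abs_sub_eq_Iic_union_Ici (a ε : ℝ) :
    {y : ℝ | ε ≤ |y - a|} = Iic (a - ε) ∪ Ici (a + ε) := by
  ext y
  simp only [mem_ofPred_eq, mem_union, mem_Iic, mem_Ici, le_abs']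
  constructor <;> rintro (h | h) <;> [left; right; left; right] <;> linarith

theorem setIntegral_setOf_le_abs_sub_eq {F f : ℝ → ℝ} {a ε l u : ℝ}
    (hε : 0 < ε) (hF : ∀ y, ε ≤ |y - a| → HasDerivAt F (f y) y)
    (hleft : ∀ y ≤ a - ε, 0 ≤ f y) (hright : ∀ y, a + ε ≤ y → f y ≤ 0)
    (hbot : Tendsto F atBot (𝓝 l)) (htop : Tendsto F atTop (𝓝 u)) :
    ∫ y in {y | ε ≤ |y - a|}, f y = F (a - ε) - l + (u - F (a + ε)) := by
  have hF_left : ∀ y ∈ Iic (a - ε), HasDerivAt F (f y) y := fun y hy =>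
    hF y (by rw [abs_sub_comm, le_abs]; left; linarith [mem_Iic.1 hy])
  have hF_right : ∀ y ∈ Ici (a + ε), HasDerivAt F (f y) y := fun y hy =>
    hF y (by rw [le_abs]; left; linarith [mem_Ici.1 hy])
  have hint_left : IntegrableOn f (Iic (a - ε)) :=
    integrableOn_Iic_deriv_of_nonneg' hF_left (fun y hy => hleft y (le_of_lt hy)) hbot
  have hint_right : IntegrableOn f (Ici (a + ε)) :=
    (integrableOn_Ici_iff_integrableOn_Ioi).2 <|
      integrableOn_Ioi_deriv_of_nonpos' hF_right (fun y hy => hright y (le_of_lt hy)) htop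
  have hdisj : Disjoint (Iic (a - ε)) (Ici (a + ε)) := Iic_disjoint_Ici.2 (by linarith)
  rw [setOf_le_abs_sub_eq_Iic_union_Ici,
    setIntegral_union hdisj measurableSet_Ici hint_left hint_right,
    integral_Iic_of_hasDerivAt_of_tendsto' hF_left hint_left hbot, integral_Ici_eq_integral_Ioi,
    integral_Ioi_of_hasDerivAt_of_tendsto' hF_right (hint_right.mono_set Ioi_subset_Ici_self) htop]

/-- `Real.log (x - y)` is `log |x - y|`, so this is a primitive of the kernel on both sides
of `x`. -/
noncomputable def arctanKernelPrimitive (x y : ℝ) : ℝ :=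
  slope arctan x y + (x * arctan y + log (1 + y ^ 2) / 2 - log (x - y)) / (1 + x ^ 2)

theorem slope_arctan_eq (x y : ℝ) : slope arctan x y = (arctan x - arctan y) / (x - y) := by
  rw [slope_def_field, ← neg_sub, ← neg_sub x, neg_div_neg_eq]

theorem hasDerivAt_arctanKernelPrimitive {x y : ℝ} (hyx : y ≠ x) :
    HasDerivAt (arctanKernelPrimitive x) ((arctan x - arctan y) / (x - y) ^ 2) y := by
  have hfun : arctanKernelPrimitive x = fun y => (arctan x - arctan y) / (x - y) +
      (x * arctan y + log (1 + y ^ 2) / 2 - log (x - y)) / (1 + x ^ 2) := by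
    funext y
    rw [arctanKernelPrimitive, slope_arctan_eq]
  have hxy : x - y ≠ 0 := sub_ne_zero.2 hyx.symm
  have hy : 1 + y ^ 2 ≠ 0 := by positivity
  have hx : 1 + x ^ 2 ≠ 0 := by positivity
  have hnum : HasDerivAt (fun y => arctan x - arctan y) (-(1 / (1 + y ^ 2))) y :=
    (hasDerivAt_arctan y).const_sub _
  have hsub : HasDerivAt (fun y => x - y) (-1) y := by
    simpa using (hasDerivAt_id y).const_sub x
  have hlog_sq : HasDerivAt (fun y => log (1 + y ^ 2)) (2 * y / (1 + y ^ 2)) y := by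
    simpa using ((hasDerivAt_pow 2 y).const_add 1).log hy
  have h := (hnum.div hsub hxy).add (((((hasDerivAt_arctan y).const_mul x).add
    (hlog_sq.div_const 2)).sub (hsub.log hxy)).div_const (1 + x ^ 2))
  rw [hfun]
  refine h.congr_deriv ?_
  field_simp
  ring

theorem tendsto_slope_arctan_cobounded (x : ℝ) :
    Tendsto (slope arctan x) (cobounded ℝ) (𝓝 0) := by
  have hbdd : ∀ y, |arctan y - arctan x| ≤ π := fun y => abs_sub_le_iff.2
    ⟨by linarith [arctan_lt_pi_div_two y, neg_pi_div_two_lt_arctan x],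
      by linarith [arctan_lt_pi_div_two x, neg_pi_div_two_lt_arctan y]⟩
  have h := bdd_le_mul_tendsto_zero' π (Eventually.of_forall hbdd)
    (tendsto_inv₀_cobounded.comp (tendsto_sub_const_cobounded x))
  refine h.congr fun y => ?_
  rw [slope_def_field, div_eq_mul_inv, Function.comp_apply]

theorem tendsto_log_one_add_sq_div_two_sub_log_sub_cobounded (x : ℝ) :
    Tendsto (fun y => log (1 + y ^ 2) / 2 - log (x - y)) (cobounded ℝ) (𝓝 0) := by
  have hcont : ContinuousAt (fun t => log (1 + t ^ 2) / 2 - log (x * t - 1)) 0 := by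
    fun_prop (disch := norm_num)
  have h0 : Tendsto (fun t => log (1 + t ^ 2) / 2 - log (x * t - 1)) (𝓝 0) (𝓝 0) := by
    simpa using hcont.tendsto
  refine (h0.comp tendsto_inv₀_cobounded).congr' ?_
  filter_upwards [eventually_ne_cobounded 0, eventually_ne_cobounded x] with y hy hyx
  have hxy : x - y ≠ 0 := sub_ne_zero.2 hyx.symm
  rw [Function.comp_apply, show 1 + y⁻¹ ^ 2 = (1 + y ^ 2) / y ^ 2 by field_simp; ring,
    show x * y⁻¹ - 1 = (x - y) / y by field_simp, log_div (by positivity) (by positivity),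
    log_div hxy hy, log_pow]
  ring

theorem tendsto_arctanKernelPrimitive (x : ℝ) {l : Filter ℝ} (hl : l ≤ cobounded ℝ) {θ : ℝ}
    (hθ : Tendsto arctan l (𝓝 θ)) :
    Tendsto (arctanKernelPrimitive x) l (𝓝 (x * θ / (1 + x ^ 2))) := by
  have h := ((tendsto_slope_arctan_cobounded x).mono_left hl).add
    (((hθ.const_mul x).add
      ((tendsto_log_one_add_sq_div_two_sub_log_sub_cobounded x).mono_left hl)).div_const
      (1 + x ^ 2))
  simp only [zero_add, add_zero] at h
  refine h.congr fun y => ?_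
  rw [arctanKernelPrimitive, add_sub_assoc]

theorem tendsto_arctanKernelPrimitive_sub_sub_add (x : ℝ) :
    Tendsto (fun ε => arctanKernelPrimitive x (x - ε) - arctanKernelPrimitive x (x + ε))
      (𝓝[>] 0) (𝓝 0) := by
  -- The logarithmic singularity of `Φ` is even about `x`; the rest of `Φ` is continuous at `x`.
  set R : ℝ → ℝ := fun y => dslope arctan x y + (x * arctan y + log (1 + y ^ 2) / 2) / (1 + x ^ 2)
  have hR : ContinuousAt R x := by
    have := continuousAt_dslope_same.2 (differentiableAt_arctan x)
    fun_prop (disch := positivity)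
  have hcont : ContinuousAt (fun ε => R (x - ε) - R (x + ε)) 0 :=
    (hR.comp_of_eq (by fun_prop) (sub_zero x)).sub (hR.comp_of_eq (by fun_prop) (add_zero x))
  have h := hcont.tendsto.mono_left (nhdsWithin_le_nhds (s := Ioi 0))
  rw [sub_zero, add_zero, sub_self] at h
  refine h.congr' ?_
  filter_upwards [self_mem_nhdsWithin] with ε (hε : 0 < ε)
  simp only [R, arctanKernelPrimitive, dslope_of_ne _ (ne_of_lt (sub_lt_self x hε)),
    dslope_of_ne _ (ne_of_gt (lt_add_of_pos_right x hε)), sub_sub_cancel, sub_add_cancel_left,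
    log_neg_eq_log]
  ring

/-- For every `x ∈ ℝ`, the principal value limit
`lim_{ε→0⁺} ∫_{|y−x| ≥ ε} (arctan(x) − arctan(y))/(x−y)² dy` exists and
equals `πx/(1+x²)`; i.e. the half-Laplacian applied to the profile
`F(x) = 1/2 + (1/π)·arctan(x)` equals `x·f(x) = x/(π(1+x²))`. -/
theorem half_laplacian_of_arctan_profile (x : ℝ) :
    Tendsto
      (fun ε : ℝ =>
        ∫ y in {y : ℝ | ε ≤ |y - x|},
          (Real.arctan x - Real.arctan y) / (x - y) ^ 2)
      (𝓝[>] (0 : ℝ)) (𝓝 (π * x / (1 + x ^ 2))) := by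
  have hbot := tendsto_arctanKernelPrimitive x IsOrderBornology.atBot_le_cobounded
    (tendsto_arctan_atBot.mono_right nhdsWithin_le_nhds)
  have htop := tendsto_arctanKernelPrimitive x IsOrderBornology.atTop_le_cobounded
    (tendsto_arctan_atTop.mono_right nhdsWithin_le_nhds)
  have hval : π * x / (1 + x ^ 2) =
      0 + (x * (π / 2) / (1 + x ^ 2) - x * -(π / 2) / (1 + x ^ 2)) := by
    ring
  rw [hval]
  refine ((tendsto_arctanKernelPrimitive_sub_sub_add x).add_const _).congr' ?_
  filter_upwards [self_mem_nhdsWithin] with ε (hε : 0 < ε)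
  rw [setIntegral_setOf_le_abs_sub_eq hε
    (fun y hy => hasDerivAt_arctanKernelPrimitive (sub_ne_zero.1 (abs_pos.1 (hε.trans_le hy))))
    (fun y hy => div_nonneg (sub_nonneg.2 (arctan_strictMono.monotone (by linarith))) (sq_nonneg _))
    (fun y hy => div_nonpos_of_nonpos_of_nonneg
      (sub_nonpos.2 (arctan_strictMono.monotone (by linarith))) (sq_nonneg _)) hbot htop]
  ring
end

section
/- Let g : [0,1] → ℝ be continuously differentiable with g(0) = 0 and g(ζ) > 0 for all ζ ∈ (0,1]. Then for every c > 0 there exists τ > 0 such that g(ζ) ≥ (c/τ)·g₀(ζ) + (1/τ)·g₁(ζ) for every ζ ∈ [0,1]. -/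
open Real

/-- With `g₀(ζ) = (1/(κπ))·sin²(πζ)` and
`g₁(ζ) = (σ/(πκ))·sin²(πζ) − (1/π)·sin(πζ)·cos(πζ)` (where `κ = cos(πβ/2)`,
`σ = sin(πβ/2)`, `β ∈ (-1,1)`): if `g` is continuously differentiable on
`[0,1]` with `g(0) = 0` and `g > 0` on `(0,1]`, then for every `c > 0` there
exists `τ > 0` such that `g(ζ) ≥ (c/τ)·g₀(ζ) + (1/τ)·g₁(ζ)` on `[0,1]`. -/
theorem exists_tau_wave_below_g
    (β : ℝ) (hβ : β ∈ Set.Ioo (-1 : ℝ) 1)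
    (κ σ : ℝ) (hκ : κ = Real.cos (π * β / 2)) (hσ : σ = Real.sin (π * β / 2))
    (g₀ g₁ : ℝ → ℝ)
    (hg₀ : ∀ ζ : ℝ, g₀ ζ = (1 / (κ * π)) * Real.sin (π * ζ) ^ 2)
    (hg₁ : ∀ ζ : ℝ, g₁ ζ = (σ / (π * κ)) * Real.sin (π * ζ) ^ 2 -
      (1 / π) * Real.sin (π * ζ) * Real.cos (π * ζ))
    (g : ℝ → ℝ) (hg : ContDiffOn ℝ 1 g (Set.Icc 0 1))
    (hg0 : g 0 = 0) (hgpos : ∀ ζ ∈ Set.Ioc (0 : ℝ) 1, 0 < g ζ) :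
    ∀ c : ℝ, 0 < c → ∃ τ : ℝ, 0 < τ ∧
      ∀ ζ ∈ Set.Icc (0 : ℝ) 1, (c / τ) * g₀ ζ + (1 / τ) * g₁ ζ ≤ g ζ := by
  intro c hc
  have hπ := Real.pi_pos
  have hκpos : 0 < κ := by
    rw [hκ]
    apply Real.cos_pos_of_mem_Ioo
    constructor
    · nlinarith [hβ.1]
    · nlinarith [hβ.2]
  set A : ℝ := c / (κ * π) + σ / (π * κ) with hA
  set f : ℝ → ℝ := fun ζ => A * Real.sin (π * ζ) - Real.cos (π * ζ) / π with hfdef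
  have hgsum : ∀ ζ, c * g₀ ζ + g₁ ζ = Real.sin (π * ζ) * f ζ := by
    intro ζ
    rw [hg₀, hg₁]
    simp only [hfdef, hA]
    ring
  have hfc : Continuous f := by
    simp only [hfdef]; fun_prop
  have hf0 : f 0 < 0 := by
    have : f 0 = -(Real.cos 0 / π) := by simp [hfdef]
    rw [this, Real.cos_zero]
    simp
    positivity
  have hev : ∀ᶠ x in nhds (0:ℝ), f x < 0 :=
    hfc.continuousAt.eventually_lt_const hf0
  obtain ⟨ε, hε, hball⟩ := Metric.eventually_nhds_iff.mp hev
  set δ : ℝ := min (ε / 2) 1 with hδdef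
  have hδpos : 0 < δ := lt_min (by linarith) one_pos
  have hδle1 : δ ≤ 1 := min_le_right _ _
  have hδε : δ < ε := lt_of_le_of_lt (min_le_left _ _) (by linarith)
  -- negative part near 0
  have hneg : ∀ ζ ∈ Set.Icc (0:ℝ) δ, f ζ < 0 := by
    intro ζ hζ
    apply hball
    rw [Real.dist_eq, sub_zero, abs_of_nonneg hζ.1]
    exact lt_of_le_of_lt hζ.2 hδε
  -- min of g on [δ,1]
  have hgc : ContinuousOn g (Set.Icc δ 1) :=
    hg.continuousOn.mono (Set.Icc_subset_Icc (le_of_lt hδpos) le_rfl)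
  obtain ⟨x₀, hx₀mem, hx₀⟩ := isCompact_Icc.exists_isMinOn (Set.nonempty_Icc.mpr hδle1) hgc
  set m : ℝ := g x₀ with hm
  have hmpos : 0 < m := hgpos x₀ ⟨lt_of_lt_of_le hδpos hx₀mem.1, hx₀mem.2⟩
  set M : ℝ := |A| + 1 / π with hM
  have hMpos : 0 < M := by positivity
  have hbound : ∀ ζ : ℝ, Real.sin (π * ζ) * f ζ ≤ M := by
    intro ζ
    have h1 : Real.sin (π * ζ) * f ζ ≤ |Real.sin (π * ζ) * f ζ| := le_abs_self _
    rw [abs_mul] at h1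
    have h2 : |Real.sin (π * ζ)| ≤ 1 := Real.abs_sin_le_one _
    have h3 : |f ζ| ≤ M := by
      simp only [hfdef]
      calc |A * Real.sin (π * ζ) - Real.cos (π * ζ) / π|
          ≤ |A * Real.sin (π * ζ)| + |Real.cos (π * ζ) / π| := abs_sub _ _
        _ ≤ |A| * 1 + 1 / π := by
            rw [abs_mul, abs_div, abs_of_pos hπ]
            gcongr <;>
              first
                | exact Real.abs_sin_le_one _
                | exact Real.abs_cos_le_one _
        _ = M := by rw [hM]; ring
    calc Real.sin (π * ζ) * f ζ ≤ |Real.sin (π * ζ)| * |f ζ| := h1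
      _ ≤ 1 * M := by
          apply mul_le_mul h2 h3 (abs_nonneg _) zero_le_one
      _ = M := one_mul _
  refine ⟨max 1 (M / m), lt_of_lt_of_le one_pos (le_max_left _ _), ?_⟩
  set τ : ℝ := max 1 (M / m) with hτ
  have hτpos : 0 < τ := lt_of_lt_of_le one_pos (le_max_left _ _)
  have hMτ : M ≤ τ * m := by
    have : M / m ≤ τ := le_max_right _ _
    calc M = (M / m) * m := by field_simp
      _ ≤ τ * m := by gcongr
  intro ζ hζ
  have hrw : (c / τ) * g₀ ζ + (1 / τ) * g₁ ζ = (Real.sin (π * ζ) * f ζ) / τ := by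
    rw [← hgsum]; ring
  rw [hrw]
  rcases le_or_gt ζ δ with hcase | hcase
  · -- f ζ < 0, sin ≥ 0, g ≥ 0
    have hs : 0 ≤ Real.sin (π * ζ) := by
      apply Real.sin_nonneg_of_nonneg_of_le_pi
      · nlinarith [hζ.1]
      · nlinarith [hζ.2]
    have hfneg : f ζ < 0 := hneg ζ ⟨hζ.1, hcase⟩
    have h0 : Real.sin (π * ζ) * f ζ ≤ 0 := by nlinarith
    have hgnn : 0 ≤ g ζ := by
      rcases eq_or_lt_of_le hζ.1 with h | h
      · rw [← h, hg0]
      · exact le_of_lt (hgpos ζ ⟨h, hζ.2⟩)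
    have : Real.sin (π * ζ) * f ζ / τ ≤ 0 :=
      div_nonpos_of_nonpos_of_nonneg h0 (le_of_lt hτpos)
    linarith
  · have hle : Real.sin (π * ζ) * f ζ ≤ τ * g ζ := by
      have hgm : m ≤ g ζ := hx₀ ⟨le_of_lt hcase, hζ.2⟩
      calc Real.sin (π * ζ) * f ζ ≤ M := hbound ζ
        _ ≤ τ * m := hMτ
        _ ≤ τ * g ζ := by gcongr
    rw [div_le_iff₀ hτpos]
    linarith [hle]
end

section
/- Let g : [0,1] → ℝ be continuously differentiable with g(0) = 0, g'(0) < 0, and suppose there exists ε ∈ (0,1) such that g(ζ) = 0 for all ζ ∈ [1−ε, 1]. Then there exist c ∈ ℝ and τ > 0 such that g(ζ) ≤ (c/τ)·g₀(ζ) + (1/τ)·g₁(ζ) for every ζ ∈ [0,1]. -/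
open Real Set Filter Topology

/-!
Put `τ = 2 / (-g'(0))` and `F = τ g - g₁`. As `g₁(0) = 0` and `g₁'(0) = -1`, we get `F(0) = 0`
and `F'(0) = -1`, so `F ≤ 0` on some `[0, δ]`. Near `1` the function `g` vanishes, so `F = -g₁`,
and on `[1/2, 1]`, where `sin(πζ) ≥ 0 ≥ cos(πζ)`, one has `-g₁ ≤ |σ| g₀`. In between, `g₀ > 0`,
so `F / g₀` is bounded above by compactness. Hence `F ≤ c g₀` on `[0, 1]` for some `c`, which is
the claim after dividing by `τ`.
-/

theorem HasDerivWithinAt.eventually_nhdsGE_le_of_neg {f : ℝ → ℝ} {f' a : ℝ}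
    (hf : HasDerivWithinAt f f' (Ici a) a) (hf' : f' < 0) :
    ∀ᶠ x in 𝓝[≥] a, f x ≤ f a := by
  have hslope : ∀ᶠ x in 𝓝[>] a, slope f a x < 0 :=
    hf.Ioi_of_Ici.limsup_slope_le' (lt_irrefl a) hf'
  have hright : ∀ᶠ x in 𝓝[>] a, f x ≤ f a := by
    filter_upwards [hslope, self_mem_nhdsWithin] with x hx hax
    exact ((slope_neg_iff_of_le hax.le).1 hx).le
  rw [← Ioi_insert, nhdsWithin_insert]
  exact eventually_sup.2 ⟨eventually_pure.2 le_rfl, hright⟩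

theorem exists_le_const_mul_on_Icc {F w : ℝ → ℝ} {a b C : ℝ}
    (hF : ContinuousOn F (Icc a b)) (hw : ContinuousOn w (Icc a b))
    (hw_nonneg : ∀ x ∈ Icc a b, 0 ≤ w x) (hw_pos : ∀ x ∈ Ioo a b, 0 < w x)
    (hleft : ∀ᶠ x in 𝓝[≥] a, F x ≤ 0) (hright : ∀ᶠ x in 𝓝[≤] b, F x ≤ C * w x) :
    ∃ c, ∀ x ∈ Icc a b, F x ≤ c * w x := by
  obtain ⟨l, hal, hl⟩ := mem_nhdsGE_iff_exists_Icc_subset.1 hleft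
  obtain ⟨r, hrb, hr⟩ := mem_nhdsLE_iff_exists_Icc_subset.1 hright
  have hsub : Icc l r ⊆ Ioo a b := fun x hx => ⟨hal.trans_le hx.1, hx.2.trans_lt hrb⟩
  obtain ⟨M, hM⟩ : BddAbove ((fun x => F x / w x) '' Icc l r) :=
    (isCompact_Icc.image_of_continuousOn <|
      ((hF.mono (hsub.trans Ioo_subset_Icc_self)).div (hw.mono (hsub.trans Ioo_subset_Icc_self))
        fun x hx => (hw_pos x (hsub hx)).ne')).bddAbove
  refine ⟨max M (max C 0), fun x hx => ?_⟩
  have hwx := hw_nonneg x hx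
  rcases le_or_gt x l with hxl | hlx
  · have hFx : F x ≤ 0 := hl ⟨hx.1, hxl⟩
    nlinarith [le_max_right C 0, le_max_right M (max C 0)]
  rcases le_or_gt r x with hrx | hxr
  · have hFx : F x ≤ C * w x := hr ⟨hrx, hx.2⟩
    nlinarith [le_max_left C 0, le_max_right M (max C 0)]
  have hmid : x ∈ Icc l r := ⟨hlx.le, hxr.le⟩
  have hFx : F x ≤ M * w x := (div_le_iff₀ (hw_pos x (hsub hmid))).1 (hM ⟨x, hmid, rfl⟩)
  nlinarith [le_max_left M (max C 0)]

/-- `g₀` and `g₁` of the statement, i.e. `f ∘ F⁻¹` and `F⁻¹ · (f ∘ F⁻¹)` for the `α = 1` stable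
law with scale `κ` and shift `σ`. -/
noncomputable def stableG₀ (κ ζ : ℝ) : ℝ := 1 / (κ * π) * sin (π * ζ) ^ 2

noncomputable def stableG₁ (κ σ ζ : ℝ) : ℝ :=
  σ / (π * κ) * sin (π * ζ) ^ 2 - 1 / π * sin (π * ζ) * cos (π * ζ)

section StableProfiles

variable {κ σ ζ : ℝ}

theorem continuous_stableG₀ : Continuous (stableG₀ κ) := by
  unfold stableG₀; fun_prop

theorem continuous_stableG₁ : Continuous (stableG₁ κ σ) := by
  unfold stableG₁; fun_prop

theorem stableG₀_nonneg (hκ : 0 ≤ κ) (ζ : ℝ) : 0 ≤ stableG₀ κ ζ := by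
  unfold stableG₀; positivity

theorem stableG₀_pos (hκ : 0 < κ) (hζ : ζ ∈ Ioo 0 1) : 0 < stableG₀ κ ζ := by
  have : 0 < sin (π * ζ) :=
    sin_pos_of_pos_of_lt_pi (by nlinarith [pi_pos, hζ.1]) (by nlinarith [pi_pos, hζ.2])
  unfold stableG₀; positivity

@[simp] theorem stableG₁_zero : stableG₁ κ σ 0 = 0 := by
  simp [stableG₁]

theorem hasDerivAt_stableG₁_zero : HasDerivAt (stableG₁ κ σ) (-1) 0 := by
  have hsin : HasDerivAt (fun ζ => sin (π * ζ)) π 0 := by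
    simpa using ((hasDerivAt_id 0).const_mul π).sin
  have hcos : HasDerivAt (fun ζ => cos (π * ζ)) 0 0 := by
    simpa using ((hasDerivAt_id 0).const_mul π).cos
  refine (((hsin.pow 2).const_mul (σ / (π * κ))).sub
    ((hsin.const_mul (1 / π)).mul hcos)).congr_deriv ?_
  simp [pi_ne_zero]

theorem neg_stableG₁_le (hκ : 0 < κ) (hζ : ζ ∈ Icc (1 / 2) 1) :
    -stableG₁ κ σ ζ ≤ |σ| * stableG₀ κ ζ := by
  have hsin : 0 ≤ sin (π * ζ) :=
    sin_nonneg_of_nonneg_of_le_pi (by nlinarith [pi_pos, hζ.1]) (by nlinarith [pi_pos, hζ.2])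
  have hcos : cos (π * ζ) ≤ 0 :=
    cos_nonpos_of_pi_div_two_le_of_le (by nlinarith [pi_pos, hζ.1]) (by nlinarith [pi_pos, hζ.2])
  have key : |σ| * stableG₀ κ ζ + stableG₁ κ σ ζ =
      (|σ| + σ) / (κ * π) * sin (π * ζ) ^ 2 + sin (π * ζ) * -cos (π * ζ) / π := by
    unfold stableG₀ stableG₁; field_simp; ring
  have : 0 ≤ |σ| + σ := by linarith [neg_abs_le σ]
  have : 0 ≤ -cos (π * ζ) := by linarith
  have : 0 ≤ |σ| * stableG₀ κ ζ + stableG₁ κ σ ζ := by rw [key]; positivity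
  linarith

theorem eventually_nhdsGE_mul_sub_stableG₁_nonpos {g : ℝ → ℝ} {g' : ℝ} (hg0 : g 0 = 0)
    (hg' : g' < 0) (hg : HasDerivWithinAt g g' (Ici 0) 0) :
    ∀ᶠ ζ in 𝓝[≥] 0, 2 / -g' * g ζ - stableG₁ κ σ ζ ≤ 0 := by
  have hτg' : 2 / -g' * g' = -2 := by
    field_simp [hg'.ne]
  have hderiv : HasDerivWithinAt (fun ζ => 2 / -g' * g ζ - stableG₁ κ σ ζ) (-1) (Ici 0) 0 :=
    ((hg.const_mul _).sub hasDerivAt_stableG₁_zero.hasDerivWithinAt).congr_deriv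
      (by rw [hτg']; norm_num)
  simpa [hg0] using hderiv.eventually_nhdsGE_le_of_neg (by norm_num)

end StableProfiles

theorem exists_tau_wave_above_g_general
    (β : ℝ) (hβ : β ∈ Set.Ioo (-1 : ℝ) 1)
    (κ σ : ℝ) (hκ : κ = Real.cos (π * β / 2))
    (g₀ g₁ : ℝ → ℝ)
    (hg₀ : ∀ ζ : ℝ, g₀ ζ = (1 / (κ * π)) * Real.sin (π * ζ) ^ 2)
    (hg₁ : ∀ ζ : ℝ, g₁ ζ = (σ / (π * κ)) * Real.sin (π * ζ) ^ 2 -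
      (1 / π) * Real.sin (π * ζ) * Real.cos (π * ζ))
    (g : ℝ → ℝ) (hg : ContDiffOn ℝ 1 g (Set.Icc 0 1))
    (hg0 : g 0 = 0) (hg'0 : derivWithin g (Set.Icc 0 1) 0 < 0)
    (hflat : ∃ ε ∈ Set.Ioo (0 : ℝ) 1, ∀ ζ ∈ Set.Icc (1 - ε) 1, g ζ = 0) :
    ∃ c : ℝ, ∃ τ : ℝ, 0 < τ ∧
      ∀ ζ ∈ Set.Icc (0 : ℝ) 1, g ζ ≤ (c / τ) * g₀ ζ + (1 / τ) * g₁ ζ := by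
  obtain rfl : g₀ = stableG₀ κ := funext hg₀
  obtain rfl : g₁ = stableG₁ κ σ := funext hg₁
  have hκpos : 0 < κ := hκ ▸ cos_pos_of_mem_Ioo
    ⟨by nlinarith [pi_pos, hβ.1], by nlinarith [pi_pos, hβ.2]⟩
  set τ := 2 / -derivWithin g (Icc 0 1) 0
  have hleft := eventually_nhdsGE_mul_sub_stableG₁_nonpos (κ := κ) (σ := σ) hg0 hg'0
    ((hg.differentiableOn one_ne_zero 0 ⟨le_rfl, zero_le_one⟩).hasDerivWithinAt
      |>.mono_of_mem_nhdsWithin (Icc_mem_nhdsGE zero_lt_one))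
  obtain ⟨ε, hε, hgε⟩ := hflat
  have hright :
      ∀ᶠ ζ in 𝓝[≤] 1, τ * g ζ - stableG₁ κ σ ζ ≤ |σ| * stableG₀ κ ζ := by
    filter_upwards [Icc_mem_nhdsLE (by linarith [hε.1] : 1 - ε < 1),
      Icc_mem_nhdsLE (by norm_num : (1 / 2 : ℝ) < 1)] with ζ hζε hζ
    simpa [hgε ζ hζε] using neg_stableG₁_le hκpos hζ
  obtain ⟨c, hc⟩ := exists_le_const_mul_on_Icc (F := fun ζ => τ * g ζ - stableG₁ κ σ ζ)
    ((continuousOn_const.mul hg.continuousOn).sub continuous_stableG₁.continuousOn)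
    continuous_stableG₀.continuousOn (fun ζ _ => stableG₀_nonneg hκpos.le ζ)
    (fun ζ hζ => stableG₀_pos hκpos hζ) hleft hright
  have hτ : 0 < τ := div_pos two_pos (neg_pos.2 hg'0)
  refine ⟨c, τ, hτ, fun ζ hζ => ?_⟩
  rw [div_mul_eq_mul_div, one_div_mul_eq_div, ← add_div, le_div_iff₀ hτ]
  have hcζ : τ * g ζ - stableG₁ κ σ ζ ≤ c * stableG₀ κ ζ := hc ζ hζ
  linarith

/-- With `g₀(ζ) = (1/(κπ))·sin²(πζ)` and
`g₁(ζ) = (σ/(πκ))·sin²(πζ) − (1/π)·sin(πζ)·cos(πζ)` (where `κ = cos(πβ/2)`,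
`σ = sin(πβ/2)`, `β ∈ (-1,1)`): if `g` is continuously differentiable on
`[0,1]` with `g(0) = 0`, `g'(0) < 0` and `g ≡ 0` on `[1−ε,1]` for some
`ε ∈ (0,1)`, then there exist `c ∈ ℝ` and `τ > 0` such that
`g(ζ) ≤ (c/τ)·g₀(ζ) + (1/τ)·g₁(ζ)` for every `ζ ∈ [0,1]`. -/
theorem exists_tau_wave_above_g
    (β : ℝ) (hβ : β ∈ Set.Ioo (-1 : ℝ) 1)
    (κ σ : ℝ) (hκ : κ = Real.cos (π * β / 2)) (hσ : σ = Real.sin (π * β / 2))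
    (g₀ g₁ : ℝ → ℝ)
    (hg₀ : ∀ ζ : ℝ, g₀ ζ = (1 / (κ * π)) * Real.sin (π * ζ) ^ 2)
    (hg₁ : ∀ ζ : ℝ, g₁ ζ = (σ / (π * κ)) * Real.sin (π * ζ) ^ 2 -
      (1 / π) * Real.sin (π * ζ) * Real.cos (π * ζ))
    (g : ℝ → ℝ) (hg : ContDiffOn ℝ 1 g (Set.Icc 0 1))
    (hg0 : g 0 = 0) (hg'0 : derivWithin g (Set.Icc 0 1) 0 < 0)
    (hflat : ∃ ε ∈ Set.Ioo (0 : ℝ) 1, ∀ ζ ∈ Set.Icc (1 - ε) 1, g ζ = 0) :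
    ∃ c : ℝ, ∃ τ : ℝ, 0 < τ ∧
      ∀ ζ ∈ Set.Icc (0 : ℝ) 1, g ζ ≤ (c / τ) * g₀ ζ + (1 / τ) * g₁ ζ :=
  exists_tau_wave_above_g_general β hβ κ σ hκ g₀ g₁ hg₀ hg₁ g hg hg0 hg'0 hflat
end
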